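/- arXiv:2109.05064 — 3 statements merged into one kernel-verified Lean document; each statement's English description precedes it below -/
import Mathlib

section
/- Let $0<\alpha<1$, $\beta$ real with $\alpha+\beta-1>0$, $\nu\geq 2$, and $c>0$. Define $\psi(r)=\int_1^\infty t^{-\beta}\exp(-c r^{\nu/(\nu-1)}/t^{1/(\nu-1)})(t-1)^{-\alpha}\,dt$ for $r\geq 0$. Then there exists a constant $C>0$ such that $\psi(r)\leq C (1+r)^{-\nu(\alpha+\beta-1)}$ for all $r\geq 0$. -/
/-!
Put `m = ν - 1`, `a = c r ^ (ν / m)` and `k = m (α + β - 1)`, so that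
`a ^ (-k) = c ^ (-k) r ^ (-ν (α + β - 1))`. Dropping the exponential factor bounds `ψ(r)` by the
convergent integral `ψ(0)`, which settles small `r`. For the decay in `r`, split the integral at
`t = 2`. On `(1, 2]` the exponential factor is at most
`exp (-a / 2 ^ (1 / m)) ≤ (k 2 ^ (1 / m) / e) ^ k a ^ (-k)`. On `(2, ∞)` the integrand is at
most `2 ^ α t ^ (-(α + β)) exp (-a / t ^ (1 / m))`, whose integral over `(0, ∞)` is
`m Γ(k) a ^ (-k)` by the substitution `t = x ^ (-m)`.
-/

open MeasureTheory Real Set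

section
variable {α β : ℝ}

lemma integrableOn_rpow_neg_mul_sub_one_rpow_neg_Ioc (hα : α < 1) :
    IntegrableOn (fun t : ℝ ↦ t ^ (-β) * (t - 1) ^ (-α)) (Ioc 1 2) := by
  have hsing : IntegrableOn (fun t : ℝ ↦ (t - 1) ^ (-α)) (Ioc 1 2) := by
    have := (intervalIntegral.intervalIntegrable_rpow' (a := 0) (b := 1)
      (by linarith : -1 < -α)).comp_sub_right 1
    norm_num at this
    exact (intervalIntegrable_iff_integrableOn_Ioc_of_le one_le_two).1 this
  exact hsing.continuousOn_mul_of_subset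
    (continuousOn_id.rpow_const fun t ht ↦ Or.inl (zero_lt_one.trans_le ht.1).ne')
    isCompact_Icc measurableSet_Ioc Ioc_subset_Icc_self

lemma rpow_neg_mul_sub_one_rpow_neg_le (hα : 0 ≤ α) {t : ℝ} (ht : 2 ≤ t) :
    t ^ (-β) * (t - 1) ^ (-α) ≤ 2 ^ α * t ^ (-(α + β)) := by
  have ht0 : 0 < t := by linarith
  calc t ^ (-β) * (t - 1) ^ (-α) ≤ t ^ (-β) * (t / 2) ^ (-α) := by
        refine mul_le_mul_of_nonneg_left ?_ (by positivity)
        exact rpow_le_rpow_of_nonpos (by positivity) (by linarith) (by linarith)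
    _ = 2 ^ α * t ^ (-(α + β)) := by
        rw [div_rpow ht0.le zero_le_two, rpow_neg zero_le_two α, div_inv_eq_mul, neg_add,
          rpow_add ht0]
        ring

lemma integrableOn_rpow_neg_mul_sub_one_rpow_neg (hα0 : 0 ≤ α) (hα1 : α < 1)
    (hαβ : 1 < α + β) :
    IntegrableOn (fun t : ℝ ↦ t ^ (-β) * (t - 1) ^ (-α)) (Ioi 1) := by
  rw [← Ioc_union_Ioi_eq_Ioi one_le_two]
  refine (integrableOn_rpow_neg_mul_sub_one_rpow_neg_Ioc hα1).union ?_
  refine Integrable.mono'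
    ((integrableOn_Ioi_rpow_of_lt (a := -(α + β)) (by linarith) two_pos).const_mul (2 ^ α))
    (by fun_prop) ((ae_restrict_iff' measurableSet_Ioi).2 (.of_forall fun t (ht : 2 < t) ↦ ?_))
  have : 0 < t - 1 := by linarith
  rw [norm_of_nonneg (by positivity)]
  exact rpow_neg_mul_sub_one_rpow_neg_le hα0 ht.le

end

-- The integrand of `ψ(r)`, with `m = ν - 1` and `a = c r ^ (ν / (ν - 1))`.
noncomputable def psiIntegrand (α β m a t : ℝ) : ℝ :=
  t ^ (-β) * exp (-a / t ^ (1 / m)) * (t - 1) ^ (-α)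

section
variable {α β m a : ℝ}

lemma psiIntegrand_eq_mul_exp (t : ℝ) :
    psiIntegrand α β m a t = t ^ (-β) * (t - 1) ^ (-α) * exp (-a / t ^ (1 / m)) := by
  rw [psiIntegrand, mul_right_comm]

lemma norm_psiIntegrand_le (ha : 0 ≤ a) {t : ℝ} (ht : 1 < t) :
    ‖psiIntegrand α β m a t‖ ≤ t ^ (-β) * (t - 1) ^ (-α) := by
  have hg : 0 ≤ t ^ (-β) * (t - 1) ^ (-α) := by
    have : 0 < t - 1 := by linarith
    positivity
  rw [psiIntegrand_eq_mul_exp, norm_mul, norm_of_nonneg hg, norm_of_nonneg (exp_pos _).le]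
  refine mul_le_of_le_one_right hg (exp_le_one_iff.2 (div_nonpos_of_nonpos_of_nonneg ?_ ?_))
  · linarith
  · have : 0 < t := by linarith
    positivity

lemma integrableOn_psiIntegrand (hα0 : 0 ≤ α) (hα1 : α < 1) (hαβ : 1 < α + β)
    (ha : 0 ≤ a) :
    IntegrableOn (psiIntegrand α β m a) (Ioi 1) :=
  (integrableOn_rpow_neg_mul_sub_one_rpow_neg hα0 hα1 hαβ).mono'
    (by unfold psiIntegrand; fun_prop)
    ((ae_restrict_iff' measurableSet_Ioi).2 (.of_forall fun _ ht ↦ norm_psiIntegrand_le ha ht))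

lemma integral_psiIntegrand_le_integral (hα0 : 0 ≤ α) (hα1 : α < 1) (hαβ : 1 < α + β)
    (ha : 0 ≤ a) :
    ∫ t in Ioi 1, psiIntegrand α β m a t ≤ ∫ t in Ioi 1, t ^ (-β) * (t - 1) ^ (-α) :=
  setIntegral_mono_on (integrableOn_psiIntegrand hα0 hα1 hαβ ha)
    (integrableOn_rpow_neg_mul_sub_one_rpow_neg hα0 hα1 hαβ) measurableSet_Ioi
    fun _ ht ↦ (le_abs_self _).trans (norm_psiIntegrand_le ha ht)

end

lemma exp_neg_le_mul_div_rpow {p x : ℝ} (hp : 0 < p) (hx : 0 < x) :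
    exp (-x) ≤ exp (-p) * (p / x) ^ p := by
  have h := rpow_le_rpow (by positivity) (mul_exp_neg_le_exp_neg_one (x / p)) hp.le
  rw [mul_rpow (by positivity) (exp_pos _).le, ← exp_mul, ← exp_mul,
    show -(x / p) * p = -x by field_simp, neg_one_mul] at h
  rw [← le_div_iff₀' (by positivity)] at h
  rwa [div_eq_mul_inv, ← inv_rpow (by positivity), inv_div] at h

section
variable {m γ a : ℝ}

-- The substitution `t = x ^ (-m)` turns the integrand into that of `Γ(m (γ - 1))`.
lemma rpow_neg_mul_exp_neg_div_rpow_comp_rpow_neg (hm : 0 < m) {x : ℝ} (hx : 0 < x) :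
    (|-m| * x ^ (-m - 1)) • ((x ^ (-m)) ^ (-γ) * exp (-a / (x ^ (-m)) ^ (1 / m)))
      = m * (x ^ (m * (γ - 1) - 1) * exp (-(a * x))) := by
  rw [smul_eq_mul, abs_neg, abs_of_pos hm, ← rpow_mul hx.le, ← rpow_mul hx.le,
    show -m * (1 / m) = -1 by field_simp, rpow_neg_one, div_inv_eq_mul, neg_mul a,
    show -m * -γ = m * γ by ring, mul_assoc, ← mul_assoc (x ^ (-m - 1)), ← rpow_add hx]
  ring_nf

lemma integrableOn_rpow_neg_mul_exp_neg_div_rpow (hm : 0 < m) (hγ : 1 < γ) (ha : 0 < a) :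
    IntegrableOn (fun t ↦ t ^ (-γ) * exp (-a / t ^ (1 / m))) (Ioi 0) := by
  rw [← integrableOn_Ioi_comp_rpow_iff _ (neg_ne_zero.2 hm.ne')]
  have hk : -1 < m * (γ - 1) - 1 := by nlinarith
  refine IntegrableOn.congr_fun
    ((integrableOn_rpow_mul_exp_neg_mul_rpow hk one_pos ha).const_mul m) (fun x hx ↦ ?_)
    measurableSet_Ioi
  rw [rpow_neg_mul_exp_neg_div_rpow_comp_rpow_neg hm hx, rpow_one, neg_mul]

lemma integral_rpow_neg_mul_exp_neg_div_rpow (hm : 0 < m) (hγ : 1 < γ) (ha : 0 < a) :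
    ∫ t in Ioi 0, t ^ (-γ) * exp (-a / t ^ (1 / m))
      = m * Gamma (m * (γ - 1)) * a ^ (-(m * (γ - 1))) := by
  rw [← integral_comp_rpow_Ioi _ (neg_ne_zero.2 hm.ne'),
    setIntegral_congr_fun measurableSet_Ioi
      (fun x hx ↦ rpow_neg_mul_exp_neg_div_rpow_comp_rpow_neg hm hx),
    integral_const_mul, integral_rpow_mul_exp_neg_mul_Ioi (by nlinarith) ha, one_div,
    inv_rpow ha.le, rpow_neg ha.le]
  ring

end

section
variable {α β m : ℝ}

lemma integral_psiIntegrand_Ioc_le (hα0 : 0 ≤ α) (hα1 : α < 1) (hαβ : 1 < α + β)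
    (hm : 0 < m) {a : ℝ} (ha : 0 < a) :
    ∫ t in Ioc 1 2, psiIntegrand α β m a t
      ≤ (∫ t in Ioc 1 2, t ^ (-β) * (t - 1) ^ (-α))
          * (exp (-(m * (α + β - 1))) * (m * (α + β - 1) * 2 ^ (1 / m)) ^ (m * (α + β - 1)))
          * a ^ (-(m * (α + β - 1))) := by
  set k := m * (α + β - 1)
  have hk : 0 < k := mul_pos hm (by linarith)
  rw [mul_assoc, ← integral_mul_const]
  refine setIntegral_mono_on
    ((integrableOn_psiIntegrand hα0 hα1 hαβ ha.le).mono_set Ioc_subset_Ioi_self)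
    ((integrableOn_rpow_neg_mul_sub_one_rpow_neg_Ioc hα1).mul_const _) measurableSet_Ioc
    fun t ⟨ht1, ht2⟩ ↦ ?_
  have hs : 0 < t ^ (1 / m) := by positivity
  have : 0 < t - 1 := by linarith
  rw [psiIntegrand_eq_mul_exp]
  refine mul_le_mul_of_nonneg_left ?_ (by positivity)
  calc exp (-a / t ^ (1 / m)) ≤ exp (-k) * (k / (a / t ^ (1 / m))) ^ k := by
        rw [neg_div]; exact exp_neg_le_mul_div_rpow hk (by positivity)
    _ = exp (-k) * (k * t ^ (1 / m)) ^ k * a ^ (-k) := by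
        rw [div_div_eq_mul_div, div_rpow (by positivity) ha.le, rpow_neg ha.le, div_eq_mul_inv,
          ← mul_assoc]
    _ ≤ exp (-k) * (k * 2 ^ (1 / m)) ^ k * a ^ (-k) := by
        gcongr

lemma integral_psiIntegrand_Ioi_two_le (hα0 : 0 ≤ α) (hα1 : α < 1) (hαβ : 1 < α + β)
    (hm : 0 < m) {a : ℝ} (ha : 0 < a) :
    ∫ t in Ioi 2, psiIntegrand α β m a t
      ≤ 2 ^ α * (m * Gamma (m * (α + β - 1))) * a ^ (-(m * (α + β - 1))) := by
  have hdecay := integrableOn_rpow_neg_mul_exp_neg_div_rpow hm hαβ ha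
  calc ∫ t in Ioi 2, psiIntegrand α β m a t
      ≤ ∫ t in Ioi 2, 2 ^ α * (t ^ (-(α + β)) * exp (-a / t ^ (1 / m))) := by
        refine setIntegral_mono_on
          ((integrableOn_psiIntegrand hα0 hα1 hαβ ha.le).mono_set (Ioi_subset_Ioi one_le_two))
          ((hdecay.mono_set (Ioi_subset_Ioi zero_le_two)).const_mul _) measurableSet_Ioi
          fun t (ht : 2 < t) ↦ ?_
        rw [psiIntegrand_eq_mul_exp, ← mul_assoc]
        exact mul_le_mul_of_nonneg_right (rpow_neg_mul_sub_one_rpow_neg_le hα0 ht.le)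
          (exp_pos _).le
    _ ≤ ∫ t in Ioi 0, 2 ^ α * (t ^ (-(α + β)) * exp (-a / t ^ (1 / m))) := by
        refine setIntegral_mono_set (hdecay.const_mul _)
          ((ae_restrict_iff' measurableSet_Ioi).2 (.of_forall fun t (ht : 0 < t) ↦ ?_))
          (Ioi_subset_Ioi zero_le_two).eventuallyLE
        positivity
    _ = 2 ^ α * (m * Gamma (m * (α + β - 1))) * a ^ (-(m * (α + β - 1))) := by
        rw [integral_const_mul, integral_rpow_neg_mul_exp_neg_div_rpow hm hαβ ha]
        ring

lemma exists_integral_psiIntegrand_le_rpow (hα0 : 0 ≤ α) (hα1 : α < 1) (hαβ : 1 < α + β)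
    (hm : 0 < m) :
    ∃ K, ∀ a, 0 < a →
      ∫ t in Ioi 1, psiIntegrand α β m a t ≤ K * a ^ (-(m * (α + β - 1))) := by
  have hsplit (a : ℝ) (ha : 0 ≤ a) :
      ∫ t in Ioi 1, psiIntegrand α β m a t =
      (∫ t in Ioc 1 2, psiIntegrand α β m a t) + ∫ t in Ioi 2, psiIntegrand α β m a t := by
    have hF := integrableOn_psiIntegrand (m := m) hα0 hα1 hαβ ha
    rw [← Ioc_union_Ioi_eq_Ioi one_le_two, setIntegral_union (Ioc_disjoint_Ioi le_rfl)
      measurableSet_Ioi (hF.mono_set Ioc_subset_Ioi_self)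
      (hF.mono_set (Ioi_subset_Ioi one_le_two))]
  exact ⟨_, fun a ha ↦ (hsplit a ha.le).trans_le
    ((add_le_add (integral_psiIntegrand_Ioc_le hα0 hα1 hαβ hm ha)
      (integral_psiIntegrand_Ioi_two_le hα0 hα1 hαβ hm ha)).trans_eq (add_mul _ _ _).symm)⟩

end

lemma exists_le_mul_one_add_rpow_neg {f : ℝ → ℝ} {M K κ : ℝ} (hκ : 0 ≤ κ)
    (hM : ∀ r, 0 ≤ r → f r ≤ M) (hK : ∀ r, 0 < r → f r ≤ K * r ^ (-κ)) :
    ∃ C > 0, ∀ r, 0 ≤ r → f r ≤ C * (1 + r) ^ (-κ) := by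
  set L := max (max M K) 1
  have hML : M ≤ L := (le_max_left M K).trans (le_max_left _ _)
  have hKL : K ≤ L := (le_max_right M K).trans (le_max_left _ _)
  refine ⟨L * 2 ^ κ, by positivity, fun r hr ↦ ?_⟩
  rcases le_total r 1 with hr1 | hr1
  · calc f r ≤ L * 2 ^ κ * 2 ^ (-κ) := by
          rw [mul_assoc, ← rpow_add two_pos, add_neg_cancel, rpow_zero, mul_one]
          exact (hM r hr).trans hML
      _ ≤ L * 2 ^ κ * (1 + r) ^ (-κ) :=
          mul_le_mul_of_nonneg_left
            (rpow_le_rpow_of_nonpos (by positivity) (by linarith) (by linarith)) (by positivity)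
  · have hr0 : 0 < r := by linarith
    calc f r ≤ L * r ^ (-κ) := (hK r hr0).trans (by gcongr)
      _ = L * 2 ^ κ * (2 * r) ^ (-κ) := by
          rw [mul_rpow zero_le_two hr0.le, rpow_neg zero_le_two]
          field_simp
      _ ≤ L * 2 ^ κ * (1 + r) ^ (-κ) :=
          mul_le_mul_of_nonneg_left
            (rpow_le_rpow_of_nonpos (by positivity) (by linarith) (by linarith)) (by positivity)

theorem psi_bound (α β ν c : ℝ) (hα0 : 0 < α) (hα1 : α < 1)
    (hαβ : α + β - 1 > 0) (hν : 2 ≤ ν) (hc : 0 < c) :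
    ∃ C > 0, ∀ r : ℝ, 0 ≤ r →
      (∫ t in Ioi (1:ℝ),
          t ^ (-β) * Real.exp (-c * r ^ (ν / (ν - 1)) / t ^ (1 / (ν - 1))) *
            (t - 1) ^ (-α))
        ≤ C * (1 + r) ^ (-(ν * (α + β - 1))) := by
  have hαβ' : 1 < α + β := by linarith
  have hm : 0 < ν - 1 := by linarith
  have hψ (r : ℝ) : (∫ t in Ioi (1:ℝ),
      t ^ (-β) * Real.exp (-c * r ^ (ν / (ν - 1)) / t ^ (1 / (ν - 1))) * (t - 1) ^ (-α))
      = ∫ t in Ioi 1, psiIntegrand α β (ν - 1) (c * r ^ (ν / (ν - 1))) t := by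
    simp only [psiIntegrand, neg_mul]
  obtain ⟨K, hK⟩ := exists_integral_psiIntegrand_le_rpow hα0.le hα1 hαβ' hm
  refine exists_le_mul_one_add_rpow_neg (M := ∫ t in Ioi 1, t ^ (-β) * (t - 1) ^ (-α))
    (K := K * c ^ (-((ν - 1) * (α + β - 1)))) (by positivity) (fun r hr ↦ ?_) (fun r hr ↦ ?_)
  · rw [hψ]
    exact integral_psiIntegrand_le_integral hα0.le hα1 hαβ' (by positivity)
  · rw [hψ]
    refine (hK _ (by positivity)).trans_eq ?_
    rw [mul_rpow hc.le (by positivity), ← rpow_mul hr.le, mul_assoc]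
    congr 3
    field_simp
end

section
/- Let $\varphi\in C_c^\infty(\mathbb{R})$ be an even function with $\varphi(x)=1$ for $|x|\leq 1$, and let $f(x)=x\varphi(x)$. Then for every $s\geq 1$ and every $x\in(0,1)$, the Strichartz functional $S_s f(x)^2 = \int_0^\infty\left[\int_{|y|<1}|f(x+ry)-f(x)|\,dy\right]^2 r^{-1-2s}\,dr$ is infinite. -/
open MeasureTheory Real Set
open scoped ENNReal

lemma abs_integral_Ioo : (∫ y in Ioo (-1:ℝ) 1, |y|) = 1 := by
  rw [← integral_Ioc_eq_integral_Ioo,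
    ← intervalIntegral.integral_of_le (by norm_num : (-1:ℝ) ≤ 1)]
  have h1 : (∫ y in (-1:ℝ)..0, |y|) = 1/2 := by
    rw [intervalIntegral.integral_congr (g := fun y => -y) ?_]
    · rw [intervalIntegral.integral_neg, integral_id]; norm_num
    · intro y hy
      rw [uIcc_of_le (by norm_num : (-1:ℝ) ≤ 0)] at hy
      exact abs_of_nonpos hy.2
  have h2 : (∫ y in (0:ℝ)..1, |y|) = 1/2 := by
    rw [intervalIntegral.integral_congr (g := fun y => y) ?_]
    · simp [integral_id]
    · intro y hy
      rw [uIcc_of_le (by norm_num : (0:ℝ) ≤ 1)] at hy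
      exact abs_of_nonneg hy.1
  rw [← intervalIntegral.integral_add_adjacent_intervals
    (b := (0:ℝ)) (continuous_abs.intervalIntegrable _ _)
    (continuous_abs.intervalIntegrable _ _), h1, h2]
  norm_num

theorem strichartz_counterexample_first_order
    (φ : ℝ → ℝ) (hφ : ContDiff ℝ (⊤ : ℕ∞) φ) (hsupp : HasCompactSupport φ)
    (heven : ∀ x, φ (-x) = φ x) (hone : ∀ x : ℝ, |x| ≤ 1 → φ x = 1)
    (s : ℝ) (hs : 1 ≤ s) (x : ℝ) (hx : x ∈ Ioo (0:ℝ) 1) :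
    (∫⁻ r in Ioi (0:ℝ),
        ENNReal.ofReal
          ((∫ y in Ioo (-1:ℝ) 1, |(x + r * y) * φ (x + r * y) - x * φ x|) ^ 2 *
            r ^ (-1 - 2 * s))) = ⊤ := by
  obtain ⟨hx0, hx1⟩ := hx
  set ε : ℝ := min x (1 - x) with hε
  have hε0 : 0 < ε := lt_min hx0 (by linarith)
  -- on (0, ε) the integrand equals r ^ (1 - 2s)
  have key : ∀ r ∈ Ioo (0:ℝ) ε,
      ENNReal.ofReal
        ((∫ y in Ioo (-1:ℝ) 1, |(x + r * y) * φ (x + r * y) - x * φ x|) ^ 2 *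
          r ^ (-1 - 2 * s)) = ENNReal.ofReal (r ^ (1 - 2 * s)) := by
    intro r hr
    obtain ⟨hr0, hrε⟩ := hr
    have hφx : φ x = 1 := hone x (by rw [abs_of_pos hx0]; linarith)
    have hinner : (∫ y in Ioo (-1:ℝ) 1, |(x + r * y) * φ (x + r * y) - x * φ x|)
        = r := by
      have : ∀ y ∈ Ioo (-1:ℝ) 1,
          |(x + r * y) * φ (x + r * y) - x * φ x| = r * |y| := by
        intro y hy
        obtain ⟨hy1, hy2⟩ := hy
        have hry : |r * y| < ε := by
          rw [abs_mul, abs_of_pos hr0]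
          calc r * |y| ≤ r * 1 := by
                exact mul_le_mul_of_nonneg_left (abs_le.2 ⟨hy1.le, hy2.le⟩) hr0.le
            _ < ε := by linarith
        have hεx : ε ≤ x := min_le_left _ _
        have hεx' : ε ≤ 1 - x := min_le_right _ _
        have habs := abs_lt.1 hry
        have h1 : |x + r * y| ≤ 1 := by
          rw [abs_le]; constructor <;> nlinarith
        rw [hone _ h1, hφx, mul_one, mul_one, add_sub_cancel_left, abs_mul,
          abs_of_pos hr0]
      rw [setIntegral_congr_fun measurableSet_Ioo this, integral_const_mul,
        abs_integral_Ioo, mul_one]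
    rw [hinner]
    congr 1
    rw [← Real.rpow_two, ← Real.rpow_add hr0]
    congr 1; ring
  -- the r ^ (1 - 2s) integral diverges
  have hdiv : (∫⁻ r in Ioo (0:ℝ) ε, ENNReal.ofReal (r ^ (1 - 2 * s))) = ⊤ := by
    by_contra h
    have hmeas : AEStronglyMeasurable (fun r : ℝ => r ^ (1 - 2 * s))
        (volume.restrict (Ioo (0:ℝ) ε)) :=
      (by fun_prop : Measurable fun r : ℝ => r ^ (1 - 2 * s)).aestronglyMeasurable
    have hnn : 0 ≤ᵐ[volume.restrict (Ioo (0:ℝ) ε)]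
        fun r : ℝ => r ^ (1 - 2 * s) := by
      filter_upwards [ae_restrict_mem measurableSet_Ioo] with r hr
      exact Real.rpow_nonneg hr.1.le _
    have hint : IntegrableOn (fun r : ℝ => r ^ (1 - 2 * s)) (Ioo 0 ε) :=
      (lintegral_ofReal_ne_top_iff_integrable hmeas hnn).1 h
    rw [intervalIntegral.integrableOn_Ioo_rpow_iff hε0] at hint
    linarith
  refine top_le_iff.1 ?_
  calc (⊤ : ℝ≥0∞) = ∫⁻ r in Ioo (0:ℝ) ε, ENNReal.ofReal (r ^ (1 - 2 * s)) :=
        hdiv.symm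
    _ = ∫⁻ r in Ioo (0:ℝ) ε,
        ENNReal.ofReal
          ((∫ y in Ioo (-1:ℝ) 1, |(x + r * y) * φ (x + r * y) - x * φ x|) ^ 2 *
            r ^ (-1 - 2 * s)) :=
        (setLIntegral_congr_fun measurableSet_Ioo key).symm
    _ ≤ _ := lintegral_mono_set (fun r hr => hr.1)
end

section
/- Let $\varphi\in C_c^\infty(\mathbb{R})$ be an even function with $\varphi(x)=1$ for $|x|\leq 1$, and let $f(x)=x^2\varphi(x)$. Then for every $s\geq 2$ and every $x\in(0,1)$, the second-order Strichartz functional $S_s^{(2)}f(x)^2=\int_0^\infty\left[\int_{|y|<1}|f(x+ry)+f(x-ry)-2f(x)|\,dy\right]^2 r^{-1-2s}\,dr$ is infinite. -/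
open MeasureTheory Real Set

theorem strichartz_counterexample_second_order
    (φ : ℝ → ℝ) (hφ : ContDiff ℝ (⊤ : ℕ∞) φ) (hsupp : HasCompactSupport φ)
    (heven : ∀ x, φ (-x) = φ x) (hone : ∀ x : ℝ, |x| ≤ 1 → φ x = 1)
    (s : ℝ) (hs : 2 ≤ s) (x : ℝ) (hx : x ∈ Ioo (0:ℝ) 1) :
    (∫⁻ r in Ioi (0:ℝ),
        ENNReal.ofReal
          ((∫ y in Ioo (-1:ℝ) 1,
              |(x + r * y) ^ 2 * φ (x + r * y) + (x - r * y) ^ 2 * φ (x - r * y) -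
                2 * (x ^ 2 * φ x)|) ^ 2 *
            r ^ (-1 - 2 * s))) = ⊤ := by
  obtain ⟨hx0, hx1⟩ := hx
  set δ := min x (1 - x) with hδdef
  have hδ0 : 0 < δ := lt_min hx0 (by linarith)
  have hδx : δ ≤ x := min_le_left _ _
  have hδ1 : δ ≤ 1 - x := min_le_right _ _
  -- the integrand on Ioo 0 δ
  have key : ∀ r ∈ Ioo (0:ℝ) δ,
      ENNReal.ofReal
          ((∫ y in Ioo (-1:ℝ) 1,
              |(x + r * y) ^ 2 * φ (x + r * y) + (x - r * y) ^ 2 * φ (x - r * y) -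
                2 * (x ^ 2 * φ x)|) ^ 2 *
            r ^ (-1 - 2 * s))
        = ENNReal.ofReal ((4 / 3 * r ^ 2) ^ 2 * r ^ (-1 - 2 * s)) := by
    rintro r ⟨hr0, hrδ⟩
    have hinner : (∫ y in Ioo (-1:ℝ) 1,
        |(x + r * y) ^ 2 * φ (x + r * y) + (x - r * y) ^ 2 * φ (x - r * y) -
          2 * (x ^ 2 * φ x)|) = 4 / 3 * r ^ 2 := by
      have hpt : ∀ y ∈ Ioo (-1:ℝ) 1,
          |(x + r * y) ^ 2 * φ (x + r * y) + (x - r * y) ^ 2 * φ (x - r * y) -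
            2 * (x ^ 2 * φ x)| = 2 * r ^ 2 * y ^ 2 := by
        rintro y ⟨hy1, hy2⟩
        have hry : |r * y| ≤ r := by
          rw [abs_mul, abs_of_pos hr0]
          nlinarith [abs_lt.2 ⟨hy1, hy2⟩]
        have habs := abs_le.1 hry
        have h1 : |x + r * y| ≤ 1 := by rw [abs_le]; constructor <;> nlinarith
        have h2 : |x - r * y| ≤ 1 := by rw [abs_le]; constructor <;> nlinarith
        have h3 : |x| ≤ 1 := by rw [abs_le]; constructor <;> nlinarith
        rw [hone _ h1, hone _ h2, hone _ h3]
        have : (x + r * y) ^ 2 * 1 + (x - r * y) ^ 2 * 1 - 2 * (x ^ 2 * 1)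
            = 2 * r ^ 2 * y ^ 2 := by ring
        rw [this, abs_of_nonneg (by positivity)]
      rw [setIntegral_congr_fun measurableSet_Ioo hpt]
      rw [MeasureTheory.integral_const_mul]
      have h23 : (∫ y in Ioo (-1:ℝ) 1, y ^ 2) = 2 / 3 := by
        rw [← integral_Ioc_eq_integral_Ioo,
          ← intervalIntegral.integral_of_le (by norm_num : (-1:ℝ) ≤ 1)]
        open intervalIntegral in norm_num [integral_pow]
      rw [h23]; ring
    rw [hinner]
  -- divergence on Ioo 0 δ
  have hdiv : (∫⁻ r in Ioo (0:ℝ) δ,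
      ENNReal.ofReal ((4 / 3 * r ^ 2) ^ 2 * r ^ (-1 - 2 * s))) = ⊤ := by
    by_contra hT
    set g : ℝ → ℝ := fun r => (4 / 3 * r ^ 2) ^ 2 * r ^ (-1 - 2 * s) with hg
    have hcont : ContinuousOn g (Ioo (0:ℝ) δ) := by
      apply ContinuousOn.mul
      · fun_prop
      · exact ContinuousOn.rpow_const continuousOn_id
          (fun r hr => Or.inl (ne_of_gt hr.1))
    have hnn : 0 ≤ᵐ[volume.restrict (Ioo (0:ℝ) δ)] g := by
      filter_upwards [ae_restrict_mem measurableSet_Ioo] with r hr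
      have hr0 : (0:ℝ) < r := hr.1
      positivity
    have hint : IntegrableOn g (Ioo (0:ℝ) δ) := by
      refine ⟨hcont.aestronglyMeasurable measurableSet_Ioo, ?_⟩
      rw [hasFiniteIntegral_iff_ofReal hnn]
      exact lt_top_iff_ne_top.2 hT
    have hint2 : IntegrableOn (fun r : ℝ => 16 / 9 * r ^ (3 - 2 * s)) (Ioo (0:ℝ) δ) := by
      apply hint.congr_fun _ measurableSet_Ioo
      rintro r ⟨hr0, _⟩
      have h4 : r ^ (4:ℕ) * r ^ (-1 - 2 * s) = r ^ (3 - 2 * s) := by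
        rw [← rpow_natCast r 4, ← rpow_add hr0]
        congr 1
        ring
      have : g r = 16 / 9 * (r ^ (4:ℕ) * r ^ (-1 - 2 * s)) := by
        simp only [hg]; ring
      rw [this, h4]
    have hint3 : IntegrableOn (fun r : ℝ => r ^ (3 - 2 * s)) (Ioo (0:ℝ) δ) := by
      have h := hint2.const_mul (9 / 16 : ℝ)
      exact IntegrableOn.congr_fun h (fun r _ => by ring) measurableSet_Ioo
    have := (intervalIntegral.integrableOn_Ioo_rpow_iff hδ0).1 hint3
    linarith
  refine top_le_iff.1 ?_
  calc (⊤ : ENNReal) = ∫⁻ r in Ioo (0:ℝ) δ,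
        ENNReal.ofReal ((4 / 3 * r ^ 2) ^ 2 * r ^ (-1 - 2 * s)) := hdiv.symm
    _ = ∫⁻ r in Ioo (0:ℝ) δ,
        ENNReal.ofReal
          ((∫ y in Ioo (-1:ℝ) 1,
              |(x + r * y) ^ 2 * φ (x + r * y) + (x - r * y) ^ 2 * φ (x - r * y) -
                2 * (x ^ 2 * φ x)|) ^ 2 *
            r ^ (-1 - 2 * s)) := by
      refine lintegral_congr_ae ?_
      filter_upwards [ae_restrict_mem measurableSet_Ioo] with r hr
      exact (key r hr).symm
    _ ≤ _ := lintegral_mono_set (fun r hr => hr.1)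
end
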